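/- Let F : ℝ^d → ℝ^d be continuously differentiable on a neighborhood of a point ω* with F(ω*) = ω*, let u ∈ ℝ^d be a unit vector, Π := I − u·uᵀ the orthogonal projection onto the orthogonal complement of u, let H : ℝ^d → ℝ^d be a symmetric linear map, γ > 0, and suppose the derivative of F at ω* equals Π∘(I − (1/γ)H). Let (ω_k) satisfy ω_{k+1} = F(ω_k) for all k, ω_k ≠ ω* for all k, and ω_k → ω*; set p_k := ω_k − ω*. If (I − (1/γ)H)(p_k/‖p_k‖) converges to some w ∈ ℝ^d with w ∉ span{u}, then Πp_k ≠ 0 for all sufficiently large k and |⟨u, p_k⟩| / ‖Πp_k‖ → 0 as k → ∞. -/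

import Mathlib

/-!
Write `p_k = ω_k − ω*` and `A = DF(ω*) = Π(I − H/γ)`. Then `p_{k+1} = A p_k + o(‖p_k‖)`, and `A`
maps into `u^⊥`, so `⟨u, p_{k+1}⟩ = o(‖p_k‖)`. Since `A(p_k/‖p_k‖) → Πw ≠ 0`, the errors shrink
at most geometrically, `‖p_k‖ = O(‖p_{k+1}‖)`, hence `⟨u, p_k⟩ = o(‖p_k‖)`; the tangential part
`Πp_k` then carries all but a vanishing fraction of the norm of `p_k`.
-/

open scoped RealInnerProductSpace
open Filter Topology Asymptotics

section Tangential

variable {E : Type*} [NormedAddCommGroup E] [InnerProductSpace ℝ E] {u : E}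

lemma inner_sub_inner_smul_self (hu : ‖u‖ = 1) (x : E) : ⟪u, x - ⟪u, x⟫ • u⟫ = 0 := by
  rw [inner_sub_right, real_inner_smul_right, real_inner_self_eq_norm_sq, hu]
  ring

lemma sub_inner_smul_ne_zero_of_notMem_span {w : E} (hw : w ∉ Submodule.span ℝ {u}) :
    w - ⟪u, w⟫ • u ≠ 0 := fun h =>
  hw (Submodule.mem_span_singleton.mpr ⟨⟪u, w⟫, (sub_eq_zero.mp h).symm⟩)

variable {α : Type*} {l : Filter α} {p : α → E}

lemma isBigO_sub_inner_smul_of_isLittleO_inner (hu : ‖u‖ = 1)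
    (h : (fun k => ⟪u, p k⟫) =o[l] p) : p =O[l] fun k => p k - ⟪u, p k⟫ • u := by
  refine .of_bound 2 ?_
  filter_upwards [h.def (c := 1 / 2) (by norm_num)] with k hk
  have htriangle : ‖p k‖ ≤ ‖p k - ⟪u, p k⟫ • u‖ + |⟪u, p k⟫| :=
    calc ‖p k‖ = ‖(p k - ⟪u, p k⟫ • u) + ⟪u, p k⟫ • u‖ := by rw [sub_add_cancel]
      _ ≤ ‖p k - ⟪u, p k⟫ • u‖ + ‖⟪u, p k⟫ • u‖ := norm_add_le _ _
      _ = ‖p k - ⟪u, p k⟫ • u‖ + |⟪u, p k⟫| := by rw [norm_smul, hu, mul_one, Real.norm_eq_abs]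
  rw [Real.norm_eq_abs] at hk
  linarith

lemma eventually_sub_inner_smul_ne_zero (hu : ‖u‖ = 1) (hp : ∀ k, p k ≠ 0)
    (h : (fun k => ⟪u, p k⟫) =o[l] p) : ∀ᶠ k in l, p k - ⟪u, p k⟫ • u ≠ 0 := by
  filter_upwards [(isBigO_sub_inner_smul_of_isLittleO_inner hu h).eq_zero_imp] with k hk
  exact fun h0 => hp k (hk h0)

lemma tendsto_abs_inner_div_norm_sub_inner_smul (hu : ‖u‖ = 1)
    (h : (fun k => ⟪u, p k⟫) =o[l] p) :
    Tendsto (fun k => |⟪u, p k⟫| / ‖p k - ⟪u, p k⟫ • u‖) l (𝓝 0) := by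
  simpa only [Real.norm_eq_abs] using
    (h.trans_isBigO (isBigO_sub_inner_smul_of_isLittleO_inner hu h)).norm_norm.tendsto_div_nhds_zero

end Tangential

section Iteration

variable {E : Type*} [NormedAddCommGroup E] [NormedSpace ℝ E] {p : ℕ → E} {A : E →L[ℝ] E} {v : E}

lemma tendsto_inv_norm_smul_succ (hrec : (fun k => p (k + 1) - A (p k)) =o[atTop] p)
    (hA : Tendsto (fun k => A (‖p k‖⁻¹ • p k)) atTop (𝓝 v)) :
    Tendsto (fun k => ‖p k‖⁻¹ • p (k + 1)) atTop (𝓝 v) := by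
  have hsplit : ∀ k, ‖p k‖⁻¹ • p (k + 1) =
      A (‖p k‖⁻¹ • p k) + ‖p k‖⁻¹ • (p (k + 1) - A (p k)) := fun k => by
    rw [map_smul, smul_sub, add_sub_cancel]
  simpa only [hsplit, add_zero] using hA.add hrec.norm_right.tendsto_inv_smul_nhds_zero

lemma isBigO_succ_of_tendsto (hrec : (fun k => p (k + 1) - A (p k)) =o[atTop] p)
    (hA : Tendsto (fun k => A (‖p k‖⁻¹ • p k)) atTop (𝓝 v)) (hv : v ≠ 0) :
    p =O[atTop] fun k => p (k + 1) := by
  have hv' : 0 < ‖v‖ := norm_pos_iff.mpr hv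
  refine .of_bound (2 / ‖v‖) ?_
  filter_upwards [(tendsto_inv_norm_smul_succ hrec hA).norm.eventually
    (lt_mem_nhds (half_lt_self hv'))] with k hk
  rw [norm_smul, norm_inv, norm_norm] at hk
  rcases (norm_nonneg (p k)).eq_or_lt with h0 | hpos
  · rw [← h0]
    positivity
  · rw [inv_mul_eq_div, lt_div_iff₀ hpos] at hk
    rw [div_mul_eq_mul_div, le_div_iff₀ hv']
    linarith

end Iteration

lemma isLittleO_inner_of_forall_inner_apply_eq_zero {E : Type*} [NormedAddCommGroup E]
    [InnerProductSpace ℝ E] {u v : E} {p : ℕ → E} {A : E →L[ℝ] E} (hAu : ∀ x, ⟪u, A x⟫ = 0)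
    (hrec : (fun k => p (k + 1) - A (p k)) =o[atTop] p)
    (hA : Tendsto (fun k => A (‖p k‖⁻¹ • p k)) atTop (𝓝 v)) (hv : v ≠ 0) :
    (fun k => ⟪u, p k⟫) =o[atTop] p := by
  have hsucc : (fun k => ⟪u, p (k + 1)⟫) =o[atTop] p :=
    (((innerSL ℝ u).isBigO_comp _ atTop).trans_isLittleO hrec).congr_left fun k => by
      simp [inner_sub_right, hAu]
  rw [← map_add_atTop_eq_nat 1, isLittleO_map]
  exact hsucc.trans_isBigO (isBigO_succ_of_tendsto hrec hA hv)

theorem stmt_14 {d : ℕ} (γ : ℝ)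
    (F : EuclideanSpace ℝ (Fin d) → EuclideanSpace ℝ (Fin d))
    (ωs : EuclideanSpace ℝ (Fin d))
    (hF : ∃ U ∈ nhds ωs, ContDiffOn ℝ 1 F U) (hfix : F ωs = ωs)
    (u : EuclideanSpace ℝ (Fin d)) (hu : ‖u‖ = 1)
    (H : EuclideanSpace ℝ (Fin d) →L[ℝ] EuclideanSpace ℝ (Fin d))
    (hJ : ∀ p, fderiv ℝ F ωs p =
      (p - (1 / γ) • H p) - ⟪u, p - (1 / γ) • H p⟫ • u)
    (ω : ℕ → EuclideanSpace ℝ (Fin d))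
    (hiter : ∀ k, ω (k + 1) = F (ω k)) (hne : ∀ k, ω k ≠ ωs)
    (hconv : Filter.Tendsto ω Filter.atTop (nhds ωs))
    (w : EuclideanSpace ℝ (Fin d)) (hw : w ∉ Submodule.span ℝ {u})
    (hlim : Filter.Tendsto
      (fun k => ‖ω k - ωs‖⁻¹ • (ω k - ωs) - (1 / γ) • H (‖ω k - ωs‖⁻¹ • (ω k - ωs)))
      Filter.atTop (nhds w)) :
    (∀ᶠ k in Filter.atTop, (ω k - ωs) - ⟪u, ω k - ωs⟫ • u ≠ 0) ∧
    Filter.Tendsto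
      (fun k => |⟪u, ω k - ωs⟫| / ‖(ω k - ωs) - ⟪u, ω k - ωs⟫ • u‖)
      Filter.atTop (nhds 0) := by
  obtain ⟨U, hU, hFU⟩ := hF
  have hderiv : HasFDerivAt F (fderiv ℝ F ωs) ωs :=
    ((hFU.contDiffAt hU).differentiableAt one_ne_zero).hasFDerivAt
  have hrec : (fun k => (ω (k + 1) - ωs) - fderiv ℝ F ωs (ω k - ωs)) =o[atTop]
      fun k => ω k - ωs := by
    simpa only [Function.comp_def, hiter, hfix] using hderiv.isLittleO.comp_tendsto hconv
  have hA : Tendsto (fun k => fderiv ℝ F ωs (‖ω k - ωs‖⁻¹ • (ω k - ωs))) atTop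
      (𝓝 (w - ⟪u, w⟫ • u)) := by
    have hproj : Continuous fun x : EuclideanSpace ℝ (Fin d) => x - ⟪u, x⟫ • u := by fun_prop
    simpa only [hJ, Function.comp_def] using (hproj.tendsto w).comp hlim
  have hnormal := isLittleO_inner_of_forall_inner_apply_eq_zero
    (fun x => by rw [hJ]; exact inner_sub_inner_smul_self hu _) hrec hA
    (sub_inner_smul_ne_zero_of_notMem_span hw)
  exact ⟨eventually_sub_inner_smul_ne_zero hu (fun k => sub_ne_zero.mpr (hne k)) hnormal,
    tendsto_abs_inner_div_norm_sub_inner_smul hu hnormal⟩
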